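/- If ω : [g] × [g] → C∞(M) is a cocycle (ω(g₂,g₁) = -ω(g₁,g₂) and ω(g₃,g₂)+ω(g₂,g₁) = ω(g₃,g₁)), L is a formally self-adjoint linear operator on C∞(M) (meaning ∫ f·(Lh) = ∫ (Lf)·h for all smooth f,h), and Q is a function [g] → C∞(M) satisfying Q(g₂) = Q(g₁) + L(ω(g₂,g₁)) for all g₁,g₂, then the two-point functional K(g₂,g₁) := (1/2)∫ ω(g₂,g₁)·(Q(g₁)+Q(g₂)) is also a cocycle: K(g₃,g₂)+K(g₂,g₁) = K(g₃,g₁) and K(g₂,g₁) = -K(g₁,g₂). -/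
import Mathlib

/-- The two-point functional `K(g₂,g₁) = (1/2)∫ ω(g₂,g₁)(Q(g₁)+Q(g₂))` is a cocycle
whenever `ω` is a cocycle, `L` is formally self-adjoint, and `Q` has the linear
transformation law `Q(g₂) = Q(g₁) + L(ω(g₂,g₁))`.  Functions on the compact manifold `M`
are modelled by a commutative ℝ-algebra `R`, integration by a linear functional. -/
theorem stmt_0
    {G : Type*} {R : Type*} [CommRing R] [Algebra ℝ R]
    (integral : R →ₗ[ℝ] ℝ) (L : R →ₗ[ℝ] R)
    (hL : ∀ f h : R, integral (f * L h) = integral (L f * h))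
    (ω : G → G → R)
    (hanti : ∀ g₁ g₂ : G, ω g₂ g₁ = - ω g₁ g₂)
    (hcoc : ∀ g₁ g₂ g₃ : G, ω g₃ g₂ + ω g₂ g₁ = ω g₃ g₁)
    (Q : G → R)
    (hQ : ∀ g₁ g₂ : G, Q g₂ = Q g₁ + L (ω g₂ g₁))
    (K : G → G → ℝ)
    (hK : ∀ g₂ g₁ : G, K g₂ g₁ = (1/2) * integral (ω g₂ g₁ * (Q g₁ + Q g₂))) :
    (∀ g₁ g₂ g₃ : G, K g₃ g₂ + K g₂ g₁ = K g₃ g₁) ∧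
    (∀ g₁ g₂ : G, K g₂ g₁ = - K g₁ g₂) := by
  constructor
  · intro g₁ g₂ g₃
    have h31 : ω g₃ g₁ = ω g₃ g₂ + ω g₂ g₁ := (hcoc g₁ g₂ g₃).symm
    have h2 : Q g₂ = Q g₁ + L (ω g₂ g₁) := hQ g₁ g₂
    have h3 : Q g₃ = Q g₂ + L (ω g₃ g₂) := hQ g₂ g₃
    have hint : integral (ω g₃ g₂ * L (ω g₂ g₁)) = integral (ω g₂ g₁ * L (ω g₃ g₂)) := by
      rw [hL, mul_comm]
    have hR : ω g₃ g₂ * (Q g₂ + Q g₃) + ω g₂ g₁ * (Q g₁ + Q g₂)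
        = (ω g₃ g₂ + ω g₂ g₁) * (Q g₁ + Q g₃)
          + (ω g₃ g₂ * L (ω g₂ g₁) - ω g₂ g₁ * L (ω g₃ g₂)) := by
      rw [h3, h2]; ring
    have hI := congrArg integral hR
    rw [map_add, map_add, map_sub] at hI
    rw [hK, hK, hK, h31]
    linarith [hI, hint]
  · intro g₁ g₂
    rw [hK, hK, hanti g₂ g₁, neg_mul, map_neg, add_comm (Q g₂)]
    ring
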